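/- For λ ∈ ℝ let Λ : ℝ⁴ → ℝ⁴ be the linear map with matrix [[cosh λ, sinh λ, 0, 0], [sinh λ, cosh λ, 0, 0], [0, 0, 1, 0], [0, 0, 0, 1]] (a pure Lorentz boost), and let V₊ := {x ∈ ℝ⁴ : x₀ ≥ 0 and x₀² − x₁² − x₂² − x₃² ≥ 0} be the forward light cone (the positive cone of the Bloch-ball state space Ω := {(1, x₁, x₂, x₃) : x₁² + x₂² + x₃² ≤ 1}). Then: Λ is self-adjoint and positive-definite with respect to the Euclidean inner product; Λ(V₊) = V₊; and yet, for λ ≠ 0, the extreme point x := (1, 0, 1, 0) of Ω satisfies Λ x ≠ μ • x for every μ ∈ ℝ. Hence a strictly positive linear map preserving the positive cone need not fix the extreme rays when Ω has infinitely many extreme points. -/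

import Mathlib

open RealInnerProductSpace

/-- The forward light cone in `ℝ⁴`, the positive cone of the Bloch-ball state space. -/
def lightCone : Set (EuclideanSpace ℝ (Fin 4)) :=
  {x | 0 ≤ x 0 ∧ x 1 ^ 2 + x 2 ^ 2 + x 3 ^ 2 ≤ x 0 ^ 2}

/-- The Bloch-ball state space `Ω = {(1, x₁, x₂, x₃) : x₁² + x₂² + x₃² ≤ 1}`. -/
def blochBall : Set (EuclideanSpace ℝ (Fin 4)) :=
  {x | x 0 = 1 ∧ x 1 ^ 2 + x 2 ^ 2 + x 3 ^ 2 ≤ 1}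

/-- The extreme point `x = (1, 0, 1, 0)` of the Bloch ball. -/
noncomputable def blochPoint : EuclideanSpace ℝ (Fin 4) :=
  (WithLp.equiv 2 (Fin 4 → ℝ)).symm ![1, 0, 1, 0]

/-! In the null coordinates `u = x₀ + x₁`, `v = x₀ - x₁` the boost is the diagonal map
`(u, v) ↦ (eˡ u, e⁻ˡ v)` and fixes `x₂, x₃`. The light cone is `u, v ≥ 0, x₂² + x₃² ≤ u v`,
which the boost visibly preserves (and its inverse is the boost by `-l`), and the quadratic form
of the boost is `(eˡ u² + e⁻ˡ v²) / 2 + x₂² + x₃²`, which is positive definite. The point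
`(1, 0, 1, 0)` is the unique maximiser of `x₂` on the Bloch ball, hence exposed, hence extreme;
it is not an eigenvector because its image has `x₁`-coordinate `sinh l ≠ 0`. -/

local notation "ℝ⁴" => EuclideanSpace ℝ (Fin 4)

lemma inner_eq_sum_four (x y : ℝ⁴) : ⟪x, y⟫ = x 0 * y 0 + x 1 * y 1 + x 2 * y 2 + x 3 * y 3 := by
  simp only [PiLp.inner_apply, RCLike.inner_apply, Fin.sum_univ_four, conj_trivial]
  ring

lemma mem_lightCone_iff_null_coords (x : ℝ⁴) :
    x ∈ lightCone ↔ 0 ≤ x 0 + x 1 ∧ 0 ≤ x 0 - x 1 ∧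
      x 2 ^ 2 + x 3 ^ 2 ≤ (x 0 + x 1) * (x 0 - x 1) := by
  refine ⟨fun ⟨h0, h⟩ => ?_, fun ⟨hu, hv, h⟩ => ⟨by linarith, by nlinarith⟩⟩
  obtain ⟨hlow, hup⟩ :=
    abs_le_of_sq_le_sq' (by nlinarith [sq_nonneg (x 2), sq_nonneg (x 3)] : x 1 ^ 2 ≤ x 0 ^ 2) h0
  exact ⟨by linarith, by linarith, by nlinarith⟩

structure IsLorentzBoost (l : ℝ) (f : ℝ⁴ → ℝ⁴) : Prop where
  apply_zero : ∀ x, f x 0 = Real.cosh l * x 0 + Real.sinh l * x 1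
  apply_one : ∀ x, f x 1 = Real.sinh l * x 0 + Real.cosh l * x 1
  apply_two : ∀ x, f x 2 = x 2
  apply_three : ∀ x, f x 3 = x 3

noncomputable def lorentzBoost (l : ℝ) (x : ℝ⁴) : ℝ⁴ :=
  !₂[Real.cosh l * x 0 + Real.sinh l * x 1, Real.sinh l * x 0 + Real.cosh l * x 1, x 2, x 3]

lemma isLorentzBoost_lorentzBoost (l : ℝ) : IsLorentzBoost l (lorentzBoost l) :=
  ⟨fun _ => rfl, fun _ => rfl, fun _ => rfl, fun _ => rfl⟩

namespace IsLorentzBoost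

variable {l : ℝ} {f g : ℝ⁴ → ℝ⁴}

lemma apply_add (hf : IsLorentzBoost l f) (x : ℝ⁴) :
    f x 0 + f x 1 = Real.exp l * (x 0 + x 1) := by
  rw [hf.apply_zero, hf.apply_one, ← Real.cosh_add_sinh]; ring

lemma apply_sub (hf : IsLorentzBoost l f) (x : ℝ⁴) :
    f x 0 - f x 1 = Real.exp (-l) * (x 0 - x 1) := by
  rw [hf.apply_zero, hf.apply_one, ← Real.cosh_sub_sinh]; ring

lemma mapsTo_lightCone (hf : IsLorentzBoost l f) : Set.MapsTo f lightCone lightCone := by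
  intro x hx
  have hexp : Real.exp l * Real.exp (-l) = 1 := by
    rw [← Real.exp_add, add_neg_cancel, Real.exp_zero]
  rw [mem_lightCone_iff_null_coords] at hx ⊢
  obtain ⟨hu, hv, hx⟩ := hx
  refine ⟨hf.apply_add x ▸ by positivity, hf.apply_sub x ▸ by positivity, ?_⟩
  rw [hf.apply_add, hf.apply_sub, hf.apply_two, hf.apply_three]
  calc x 2 ^ 2 + x 3 ^ 2 ≤ (x 0 + x 1) * (x 0 - x 1) := hx
    _ = Real.exp l * (x 0 + x 1) * (Real.exp (-l) * (x 0 - x 1)) := by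
      linear_combination (-(x 0 + x 1) * (x 0 - x 1)) * hexp

lemma apply_apply_neg (hf : IsLorentzBoost l f) (hg : IsLorentzBoost (-l) g) (x : ℝ⁴) :
    f (g x) = x := by
  have hcs := Real.cosh_sq_sub_sinh_sq l
  have h0 : f (g x) 0 = x 0 := by
    rw [hf.apply_zero, hg.apply_zero, hg.apply_one, Real.cosh_neg, Real.sinh_neg]
    linear_combination x 0 * hcs
  have h1 : f (g x) 1 = x 1 := by
    rw [hf.apply_one, hg.apply_zero, hg.apply_one, Real.cosh_neg, Real.sinh_neg]
    linear_combination x 1 * hcs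
  have h2 : f (g x) 2 = x 2 := (hf.apply_two _).trans (hg.apply_two x)
  have h3 : f (g x) 3 = x 3 := (hf.apply_three _).trans (hg.apply_three x)
  ext i
  fin_cases i <;> assumption

lemma image_lightCone (hf : IsLorentzBoost l f) : f '' lightCone = lightCone :=
  hf.mapsTo_lightCone.image_subset.antisymm fun y hy =>
    ⟨lorentzBoost (-l) y, (isLorentzBoost_lorentzBoost (-l)).mapsTo_lightCone hy,
      hf.apply_apply_neg (isLorentzBoost_lorentzBoost (-l)) y⟩

lemma inner_apply_comm (hf : IsLorentzBoost l f) (x y : ℝ⁴) : ⟪x, f y⟫ = ⟪f x, y⟫ := by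
  simp only [inner_eq_sum_four, hf.apply_zero, hf.apply_one, hf.apply_two, hf.apply_three]
  ring

lemma inner_self_apply (hf : IsLorentzBoost l f) (x : ℝ⁴) :
    ⟪x, f x⟫ = (Real.exp l * (x 0 + x 1) ^ 2 + Real.exp (-l) * (x 0 - x 1) ^ 2) / 2
      + x 2 ^ 2 + x 3 ^ 2 := by
  rw [← Real.cosh_sub_sinh, ← Real.cosh_add_sinh]
  simp only [inner_eq_sum_four, hf.apply_zero, hf.apply_one, hf.apply_two, hf.apply_three]
  ring

lemma inner_self_apply_pos (hf : IsLorentzBoost l f) {x : ℝ⁴} (hx : x ≠ 0) :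
    0 < ⟪x, f x⟫ := by
  rw [hf.inner_self_apply]
  contrapose! hx
  have hu : 0 ≤ Real.exp l * (x 0 + x 1) ^ 2 := by positivity
  have hv : 0 ≤ Real.exp (-l) * (x 0 - x 1) ^ 2 := by positivity
  have h2 := sq_nonneg (x 2)
  have h3 := sq_nonneg (x 3)
  obtain ⟨hu, hv, h2, h3⟩ : Real.exp l * (x 0 + x 1) ^ 2 = 0 ∧ Real.exp (-l) * (x 0 - x 1) ^ 2 = 0 ∧
      x 2 ^ 2 = 0 ∧ x 3 ^ 2 = 0 := ⟨by linarith, by linarith, by linarith, by linarith⟩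
  simp only [mul_eq_zero, Real.exp_ne_zero, false_or, pow_eq_zero_iff two_ne_zero] at hu hv h2 h3
  ext i
  fin_cases i <;> simp <;> linarith

end IsLorentzBoost

lemma blochPoint_mem_exposedPoints : blochPoint ∈ Set.exposedPoints ℝ blochBall := by
  refine ⟨⟨by simp [blochPoint], by simp [blochPoint]⟩, EuclideanSpace.proj 2,
    fun y ⟨hy0, hy⟩ => ?_⟩
  have hb2 : blochPoint 2 = 1 := by simp [blochPoint]
  simp only [EuclideanSpace.coe_proj, hb2]
  refine ⟨by nlinarith [sq_nonneg (y 1), sq_nonneg (y 3)], fun hy2 => ?_⟩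
  have h1 : y 1 = 0 := by nlinarith [sq_nonneg (y 1), sq_nonneg (y 3)]
  have h3 : y 3 = 0 := by nlinarith [sq_nonneg (y 1), sq_nonneg (y 3)]
  have h2 : y 2 = 1 := by nlinarith [sq_nonneg (y 1), sq_nonneg (y 3)]
  ext i
  fin_cases i <;> simp [blochPoint, hy0, h1, h2, h3]

/-- **Counterexample (appendix of the paper).** The pure Lorentz boost `Λ` is a strictly
positive linear map with `Λ(V₊) = V₊` for the forward light cone, yet for `λ ≠ 0` it does
not fix the extreme ray through `(1, 0, 1, 0)` of the Bloch ball. -/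
theorem lorentzBoost_counterexample
    (l : ℝ) (L : EuclideanSpace ℝ (Fin 4) →ₗ[ℝ] EuclideanSpace ℝ (Fin 4))
    (hL0 : ∀ x, L x 0 = Real.cosh l * x 0 + Real.sinh l * x 1)
    (hL1 : ∀ x, L x 1 = Real.sinh l * x 0 + Real.cosh l * x 1)
    (hL2 : ∀ x, L x 2 = x 2) (hL3 : ∀ x, L x 3 = x 3) :
    (∀ x y : EuclideanSpace ℝ (Fin 4), ⟪x, L y⟫ = ⟪L x, y⟫) ∧
    (∀ x : EuclideanSpace ℝ (Fin 4), x ≠ 0 → 0 < ⟪x, L x⟫) ∧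
    L '' lightCone = lightCone ∧
    blochPoint ∈ Set.extremePoints ℝ blochBall ∧
    (l ≠ 0 → ∀ μ : ℝ, L blochPoint ≠ μ • blochPoint) := by
  have hL : IsLorentzBoost l L := ⟨hL0, hL1, hL2, hL3⟩
  refine ⟨hL.inner_apply_comm, fun _ => hL.inner_self_apply_pos, hL.image_lightCone,
    exposedPoints_subset_extremePoints blochPoint_mem_exposedPoints, fun hl μ h => hl ?_⟩
  simpa [hL.apply_one, blochPoint] using congrArg (· 1) h
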